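/- There exists an election showing the Monroe rule fails weak support monotonicity with population increase: with k = 4 and candidates {a,b,c,d,e,f,g,h}, after voters cast ballots (5×{a,e}, 4×{a,g}, 5×{b,e}, 4×{b,h}, 5×{c,f}, 4×{c,g}, 3×{d,f}, 3×{d,h}), the unique Monroe winning committee is {e,f,g,h}, but after adding two new voters each approving only {e}, the unique Monroe winning committee is {a,b,c,d}, which is disjoint from {e,f,g,h}. -/

import Mathlib

open Finset

/-- `π` is a valid Monroe assignment of the voters to the committee `W`. -/
def isMonroeAssignment {C : Type*} [DecidableEq C] {V : Type*} [Fintype V]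
    (k : ℕ) (W : Finset C) (π : V → C) : Prop :=
  (∀ i, π i ∈ W) ∧
  ∀ c ∈ W, Fintype.card V / k ≤ (univ.filter fun i => π i = c).card ∧
    (univ.filter fun i => π i = c).card ≤ (Fintype.card V + k - 1) / k

/-- The Monroe misrepresentation of a committee `W`. -/
noncomputable def monroeMisrep {C : Type*} [DecidableEq C] {V : Type*} [Fintype V]
    (A : V → Finset C) (k : ℕ) (W : Finset C) : ℕ :=
  sInf {m : ℕ | ∃ π : V → C, isMonroeAssignment k W π ∧
    m = (univ.filter fun i => π i ∉ A i).card}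

/-- `W` is a winning committee of the Monroe rule for `(A, k)`. -/
def isMonroeWinner {C : Type*} [DecidableEq C] {V : Type*} [Fintype V]
    (A : V → Finset C) (k : ℕ) (W : Finset C) : Prop :=
  W.card = k ∧ ∀ W' : Finset C, W'.card = k → monroeMisrep A k W ≤ monroeMisrep A k W'

/-- Candidates `a,b,c,d,e,f,g,h` are `0,…,7`.  The 33-voter profile:
5×{a,e}, 4×{a,g}, 5×{b,e}, 4×{b,h}, 5×{c,f}, 4×{c,g}, 3×{d,f}, 3×{d,h}. -/
def A₈ : Fin 33 → Finset (Fin 8) := fun i =>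
  if i.val < 5 then {0, 4} else if i.val < 9 then {0, 6}
  else if i.val < 14 then {1, 4} else if i.val < 18 then {1, 7}
  else if i.val < 23 then {2, 5} else if i.val < 27 then {2, 6}
  else if i.val < 30 then {3, 5} else {3, 7}

/-- The profile after two new voters, each approving only `{e}`, enter. -/
def A₈' : Fin 35 → Finset (Fin 8) := fun i =>
  if h : i.val < 33 then A₈ ⟨i.val, h⟩ else {4}

set_option maxRecDepth 4000
set_option maxHeartbeats 1000000


section general
variable {n : ℕ}

lemma sum_fiber_le (A : Fin n → Finset (Fin 8)) (T : Finset (Fin 8)) (π : Fin n → Fin 8) :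
    (∑ c ∈ T, (univ.filter fun i => π i = c).card) ≤
      (univ.filter fun i => ∃ c ∈ T, c ∈ A i).card +
        (univ.filter fun i => π i ∉ A i).card := by
  have h1 : (univ.filter fun i => π i ∈ T).card
      = ∑ c ∈ T, (univ.filter fun i => π i = c).card := by
    rw [Finset.card_eq_sum_card_fiberwise (f := π) (s := univ.filter fun i => π i ∈ T) (t := T)
      (fun i hi => (mem_filter.mp hi).2)]
    refine Finset.sum_congr rfl fun c hc => ?_
    congr 1
    ext i
    simp only [mem_filter, mem_univ, true_and]
    exact ⟨fun h => h.2, fun h => ⟨h ▸ hc, h⟩⟩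
  rw [← h1]
  refine le_trans (Finset.card_le_card ?_) (Finset.card_union_le _ _)
  intro i hi
  simp only [mem_filter, mem_univ, true_and, mem_union] at *
  by_cases h : π i ∈ A i
  · exact Or.inl ⟨π i, hi, h⟩
  · exact Or.inr h

lemma unsat_ge (A : Fin n → Finset (Fin 8)) {W T : Finset (Fin 8)} {π : Fin n → Fin 8}
    (hT : T ⊆ W) (hπ : isMonroeAssignment 4 W π) (hW : W.card = 4) {b v : ℕ}
    (hv : (univ.filter fun i => ∃ c ∈ T, c ∈ A i).card = v)
    (hb : v + b ≤ max (T.card * (n / 4)) (n - (4 - T.card) * ((n + 3) / 4))) :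
    b ≤ (univ.filter fun i => π i ∉ A i).card := by
  have key := sum_fiber_le A T π
  obtain ⟨hmem, hcnt⟩ := hπ
  have hq : ∀ c ∈ W, n / 4 ≤ (univ.filter fun i => π i = c).card ∧
      (univ.filter fun i => π i = c).card ≤ (n + 3) / 4 := by
    intro c hc
    have h := hcnt c hc
    rw [Fintype.card_fin] at h
    have h4 : n + 4 - 1 = n + 3 := by omega
    rw [h4] at h
    exact h
  have h1 : T.card * (n / 4) ≤ ∑ c ∈ T, (univ.filter fun i => π i = c).card := by
    calc T.card * (n / 4) = ∑ _c ∈ T, n / 4 := by rw [Finset.sum_const, smul_eq_mul]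
      _ ≤ _ := Finset.sum_le_sum fun c hc => (hq c (hT hc)).1
  have htot : ∑ c ∈ W, (univ.filter fun i => π i = c).card = n := by
    rw [← Finset.card_eq_sum_card_fiberwise (fun i (_ : i ∈ univ) => hmem i)]
    simp
  have hsplit : (∑ c ∈ W \ T, (univ.filter fun i => π i = c).card)
      + ∑ c ∈ T, (univ.filter fun i => π i = c).card = n := by
    rw [Finset.sum_sdiff hT]; exact htot
  have h2 : ∑ c ∈ W \ T, (univ.filter fun i => π i = c).card
      ≤ (4 - T.card) * ((n + 3) / 4) := by
    calc ∑ c ∈ W \ T, (univ.filter fun i => π i = c).card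
        ≤ ∑ _c ∈ W \ T, (n + 3) / 4 :=
          Finset.sum_le_sum fun c hc => (hq c (Finset.mem_sdiff.mp hc).1).2
      _ = (W \ T).card * ((n + 3) / 4) := by rw [Finset.sum_const, smul_eq_mul]
      _ = (4 - T.card) * ((n + 3) / 4) := by rw [Finset.card_sdiff_of_subset hT, hW]
  have h3 : n - (4 - T.card) * ((n + 3) / 4)
      ≤ ∑ c ∈ T, (univ.filter fun i => π i = c).card := by omega
  have hmax : max (T.card * (n / 4)) (n - (4 - T.card) * ((n + 3) / 4))
      ≤ ∑ c ∈ T, (univ.filter fun i => π i = c).card := max_le h1 h3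
  rw [hv] at key
  omega

lemma monroeMisrep_le (A : Fin n → Finset (Fin 8)) {W : Finset (Fin 8)} {π : Fin n → Fin 8}
    (hπ : isMonroeAssignment 4 W π) :
    monroeMisrep A 4 W ≤ (univ.filter fun i => π i ∉ A i).card :=
  Nat.sInf_le ⟨π, hπ, rfl⟩

lemma monroeMisrep_ge (A : Fin n → Finset (Fin 8)) {W T : Finset (Fin 8)}
    (hex : ∃ π : Fin n → Fin 8, isMonroeAssignment 4 W π) (hT : T ⊆ W) (hW : W.card = 4)
    {b v : ℕ} (hv : (univ.filter fun i => ∃ c ∈ T, c ∈ A i).card = v)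
    (hb : v + b ≤ max (T.card * (n / 4)) (n - (4 - T.card) * ((n + 3) / 4))) :
    b ≤ monroeMisrep A 4 W := by
  obtain ⟨π₀, hπ₀⟩ := hex
  have hne : {m : ℕ | ∃ π : Fin n → Fin 8, isMonroeAssignment 4 W π ∧
      m = (univ.filter fun i => π i ∉ A i).card}.Nonempty := ⟨_, π₀, hπ₀, rfl⟩
  obtain ⟨π, hπ, hm⟩ := Nat.sInf_mem hne
  rw [monroeMisrep, hm]
  exact unsat_ge A hT hπ hW hv hb

lemma exists_assignment (idx : Fin n → Fin 4)
    (hcnt : ∀ j : Fin 4, n / 4 ≤ (univ.filter fun i => idx i = j).card ∧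
      (univ.filter fun i => idx i = j).card ≤ (n + 3) / 4)
    {W : Finset (Fin 8)} (hW : W.card = 4) :
    ∃ π : Fin n → Fin 8, isMonroeAssignment 4 W π := by
  set l := W.sort (· ≤ ·) with hl
  have hlen : l.length = 4 := by rw [hl, Finset.length_sort, hW]
  refine ⟨fun i => l.get ((idx i).cast hlen.symm), fun i => ?_, fun c hc => ?_⟩
  · exact (Finset.mem_sort _).mp (l.get_mem _)
  · have hcl : c ∈ l := (Finset.mem_sort _).mpr hc
    obtain ⟨j, hj⟩ := List.mem_iff_get.mp hcl
    have hnd : l.Nodup := W.sort_nodup _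
    have heq : (univ.filter fun i => l.get ((idx i).cast hlen.symm) = c)
        = univ.filter fun i => idx i = j.cast hlen := by
      apply Finset.filter_congr
      intro i _
      rw [← hj, List.Nodup.get_inj_iff hnd]
      constructor
      · intro h
        exact Fin.ext (by simpa using congrArg Fin.val h)
      · intro h
        exact Fin.ext (by simpa using congrArg Fin.val h)
    rw [Fintype.card_fin]
    have h4 : n + 4 - 1 = n + 3 := by omega
    rw [h4, heq]
    exact hcnt (j.cast hlen)

end general

def idx33 : Fin 33 → Fin 4 := fun i =>
  if i.val < 9 then 0 else ⟨min 3 ((i.val - 1) / 8), Nat.lt_succ_of_le (Nat.min_le_left _ _)⟩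

def idx35 : Fin 35 → Fin 4 := fun i =>
  ⟨min 3 (i.val / 9), Nat.lt_succ_of_le (Nat.min_le_left _ _)⟩

lemma idx33_cnt : ∀ j : Fin 4, 33 / 4 ≤ (univ.filter fun i => idx33 i = j).card ∧
    (univ.filter fun i => idx33 i = j).card ≤ (33 + 3) / 4 := by decide

lemma idx35_cnt : ∀ j : Fin 4, 35 / 4 ≤ (univ.filter fun i => idx35 i = j).card ∧
    (univ.filter fun i => idx35 i = j).card ≤ (35 + 3) / 4 := by decide

def π₁ : Fin 33 → Fin 8 := fun i =>
  if i.val < 5 then 4 else if i.val < 9 then 6 else if i.val < 13 then 4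
  else if i.val < 18 then 7 else if i.val < 23 then 5 else if i.val < 27 then 6
  else if i.val < 30 then 5 else 7

lemma hπ₁ : isMonroeAssignment 4 ({4, 5, 6, 7} : Finset (Fin 8)) π₁ := by
  unfold isMonroeAssignment; decide

lemma misrep_efgh_le : monroeMisrep A₈ 4 {4, 5, 6, 7} ≤ 1 := by
  have h := monroeMisrep_le A₈ hπ₁
  have h1 : (univ.filter fun i => π₁ i ∉ A₈ i).card = 1 := by decide
  omega

def π₂ : Fin 35 → Fin 8 := fun i =>
  if i.val < 9 then 0 else if i.val < 18 then 1 else if i.val < 27 then 2 else 3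

lemma hπ₂ : isMonroeAssignment 4 ({0, 1, 2, 3} : Finset (Fin 8)) π₂ := by
  unfold isMonroeAssignment; decide

lemma misrep_abcd_le : monroeMisrep A₈' 4 {0, 1, 2, 3} ≤ 2 := by
  have h := monroeMisrep_le A₈' hπ₂
  have h1 : (univ.filter fun i => π₂ i ∉ A₈' i).card = 2 := by decide
  omega

def NcntOld (T : Finset (Fin 8)) : ℕ :=
  (univ.filter fun i : Fin 33 => ∃ c ∈ T, c ∈ A₈ i).card

def nOld : Finset (Fin 8) → ℕ := fun T =>
  if T = {3} then 6 else
  if T = {0, 4} then 14 else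
  if T = {2, 5} then 12 else
  if T = {0, 6} then 13 else
  if T = {1, 7} then 12 else
  if T = {1, 4} then 14 else
  if T = {2, 6} then 13 else 999

lemma nOldN0 : NcntOld {3} = 6 := by decide
lemma nOldN1 : NcntOld {0, 4} = 14 := by decide
lemma nOldN2 : NcntOld {2, 5} = 12 := by decide
lemma nOldN3 : NcntOld {0, 6} = 13 := by decide
lemma nOldN4 : NcntOld {1, 7} = 12 := by decide
lemma nOldN5 : NcntOld {1, 4} = 14 := by decide
lemma nOldN6 : NcntOld {2, 6} = 13 := by decide

lemma nOld_correct : ∀ T : Finset (Fin 8), nOld T ≠ 999 → NcntOld T = nOld T := by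
  intro T h
  by_cases h0 : T = {3}
  · subst h0; exact nOldN0
  by_cases h1 : T = {0, 4}
  · subst h1; exact nOldN1
  by_cases h2 : T = {2, 5}
  · subst h2; exact nOldN2
  by_cases h3 : T = {0, 6}
  · subst h3; exact nOldN3
  by_cases h4 : T = {1, 7}
  · subst h4; exact nOldN4
  by_cases h5 : T = {1, 4}
  · subst h5; exact nOldN5
  by_cases h6 : T = {2, 6}
  · subst h6; exact nOldN6
  exfalso; apply h; unfold nOld
  simp only [if_neg h0, if_neg h1, if_neg h2, if_neg h3, if_neg h4, if_neg h5, if_neg h6]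

lemma dispatchOld : ∀ W ∈ (univ : Finset (Fin 8)).powersetCard 4, W = ({4, 5, 6, 7} : Finset (Fin 8)) ∨
    ∃ T ∈ W.powerset, nOld T + 2 ≤ max (T.card * (33 / 4)) (33 - (4 - T.card) * ((33 + 3) / 4)) := by decide

def NcntNew (T : Finset (Fin 8)) : ℕ :=
  (univ.filter fun i : Fin 35 => ∃ c ∈ T, c ∈ A₈' i).card

def nNew : Finset (Fin 8) → ℕ := fun T =>
  if T = {0, 1, 4} then 20 else
  if T = {2, 5} then 12 else
  if T = {0, 6} then 13 else
  if T = {1, 7} then 12 else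
  if T = {3, 5} then 11 else
  if T = {0, 3, 4} then 22 else
  if T = {3, 7} then 10 else
  if T = {0, 4, 7} then 23 else
  if T = {1, 3, 4} then 22 else
  if T = {2, 6} then 13 else
  if T = {1, 4, 5, 6} then 32 else
  if T = {5, 6, 7} then 23 else 999

lemma nNewN0 : NcntNew {0, 1, 4} = 20 := by decide
lemma nNewN1 : NcntNew {2, 5} = 12 := by decide
lemma nNewN2 : NcntNew {0, 6} = 13 := by decide
lemma nNewN3 : NcntNew {1, 7} = 12 := by decide
lemma nNewN4 : NcntNew {3, 5} = 11 := by decide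
lemma nNewN5 : NcntNew {0, 3, 4} = 22 := by decide
lemma nNewN6 : NcntNew {3, 7} = 10 := by decide
lemma nNewN7 : NcntNew {0, 4, 7} = 23 := by decide
lemma nNewN8 : NcntNew {1, 3, 4} = 22 := by decide
lemma nNewN9 : NcntNew {2, 6} = 13 := by decide
lemma nNewN10 : NcntNew {1, 4, 5, 6} = 32 := by decide
lemma nNewN11 : NcntNew {5, 6, 7} = 23 := by decide

lemma nNew_correct : ∀ T : Finset (Fin 8), nNew T ≠ 999 → NcntNew T = nNew T := by
  intro T h
  by_cases h0 : T = {0, 1, 4}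
  · subst h0; exact nNewN0
  by_cases h1 : T = {2, 5}
  · subst h1; exact nNewN1
  by_cases h2 : T = {0, 6}
  · subst h2; exact nNewN2
  by_cases h3 : T = {1, 7}
  · subst h3; exact nNewN3
  by_cases h4 : T = {3, 5}
  · subst h4; exact nNewN4
  by_cases h5 : T = {0, 3, 4}
  · subst h5; exact nNewN5
  by_cases h6 : T = {3, 7}
  · subst h6; exact nNewN6
  by_cases h7 : T = {0, 4, 7}
  · subst h7; exact nNewN7
  by_cases h8 : T = {1, 3, 4}
  · subst h8; exact nNewN8
  by_cases h9 : T = {2, 6}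
  · subst h9; exact nNewN9
  by_cases h10 : T = {1, 4, 5, 6}
  · subst h10; exact nNewN10
  by_cases h11 : T = {5, 6, 7}
  · subst h11; exact nNewN11
  exfalso; apply h; unfold nNew
  simp only [if_neg h0, if_neg h1, if_neg h2, if_neg h3, if_neg h4, if_neg h5, if_neg h6, if_neg h7, if_neg h8, if_neg h9, if_neg h10, if_neg h11]

lemma dispatchNew : ∀ W ∈ (univ : Finset (Fin 8)).powersetCard 4, W = ({0, 1, 2, 3} : Finset (Fin 8)) ∨
    ∃ T ∈ W.powerset, nNew T + 3 ≤ max (T.card * (35 / 4)) (35 - (4 - T.card) * ((35 + 3) / 4)) := by decide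

lemma card_le_8 (T : Finset (Fin 8)) : T.card ≤ 8 := by
  have := Finset.card_le_univ T
  simpa using this

lemma misrep_old_ge (W : Finset (Fin 8)) (hW : W.card = 4) (hne : W ≠ {4, 5, 6, 7}) :
    2 ≤ monroeMisrep A₈ 4 W := by
  rcases dispatchOld W (by rwa [Finset.mem_powersetCard_univ]) with h | ⟨T, hTW, hb⟩
  · exact absurd h hne
  have hnn : nOld T ≠ 999 := by
    have h8 := card_le_8 T
    omega
  exact monroeMisrep_ge A₈ (exists_assignment idx33 idx33_cnt hW)
    (Finset.mem_powerset.mp hTW) hW (show (univ.filter fun i : Fin 33 => ∃ c ∈ T, c ∈ A₈ i).card = nOld T from nOld_correct T hnn) hb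

lemma misrep_new_ge (W : Finset (Fin 8)) (hW : W.card = 4) (hne : W ≠ {0, 1, 2, 3}) :
    3 ≤ monroeMisrep A₈' 4 W := by
  rcases dispatchNew W (by rwa [Finset.mem_powersetCard_univ]) with h | ⟨T, hTW, hb⟩
  · exact absurd h hne
  have hnn : nNew T ≠ 999 := by
    have h8 := card_le_8 T
    omega
  exact monroeMisrep_ge A₈' (exists_assignment idx35 idx35_cnt hW)
    (Finset.mem_powerset.mp hTW) hW (show (univ.filter fun i : Fin 35 => ∃ c ∈ T, c ∈ A₈' i).card = nNew T from nNew_correct T hnn) hb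

/-- The Monroe rule fails weak support monotonicity with population increase:
in the original election the unique winning committee is `{e,f,g,h}`, but after
two voters approving only `{e}` enter, the unique winning committee is
`{a,b,c,d}`, which is disjoint from `{e,f,g,h}`. -/
theorem monroe_fails_weak_SMWPI :
    (∀ W : Finset (Fin 8), isMonroeWinner A₈ 4 W ↔ W = {4, 5, 6, 7}) ∧
    (∀ W : Finset (Fin 8), isMonroeWinner A₈' 4 W ↔ W = {0, 1, 2, 3}) ∧
    ({0, 1, 2, 3} : Finset (Fin 8)) ∩ {4, 5, 6, 7} = ∅ := by
  refine ⟨fun W => ⟨?_, ?_⟩, fun W => ⟨?_, ?_⟩, by decide⟩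
  · rintro ⟨hcard, hmin⟩
    by_contra hne
    have h2 := misrep_old_ge W hcard hne
    have h1 := misrep_efgh_le
    have h3 := hmin {4, 5, 6, 7} (by decide)
    omega
  · rintro rfl
    refine ⟨by decide, fun W' hW' => ?_⟩
    by_cases h : W' = ({4, 5, 6, 7} : Finset (Fin 8))
    · exact h ▸ le_refl _
    · have h2 := misrep_old_ge W' hW' h
      have h1 := misrep_efgh_le
      omega
  · rintro ⟨hcard, hmin⟩
    by_contra hne
    have h2 := misrep_new_ge W hcard hne
    have h1 := misrep_abcd_le
    have h3 := hmin {0, 1, 2, 3} (by decide)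
    omega
  · rintro rfl
    refine ⟨by decide, fun W' hW' => ?_⟩
    by_cases h : W' = ({0, 1, 2, 3} : Finset (Fin 8))
    · exact h ▸ le_refl _
    · have h2 := misrep_new_ge W' hW' h
      have h1 := misrep_abcd_le
      omega
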